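/- arXiv:2105.07074 — 2 statements merged into one kernel-verified Lean document; each statement's English description precedes it below -/
import Mathlib

section
/- Let s ∈ ℝ with s̄ = s/μ < min(1, ρ, β). Suppose real numbers v_{q,0}, v_{q,1} for q = 1,…,2B+1 satisfy: (η−s)·v_{1,0} = μ·v_{3,1} and (η−s)·v_{1,1} = μ·π₃; (η+λ−s)·v_{2,0} = μ·v_{5,1} + η·v_{1,0} and (η+λ−s)·v_{2,1} = μ·π₅ + η·π₁; for 2 ≤ k ≤ B−1, (η+λ−s)·v_{2k,0} = μ·v_{2k+3,1} + η·v_{2k−2,0} and (η+λ−s)·v_{2k,1} = μ·π_{2k+3} + η·π_{2k−2}; (λ−s)·v_{2B,0} = η·v_{2B−2,0} and (λ−s)·v_{2B,1} = η·π_{2B−2}; for 1 ≤ k ≤ B, (λ+μ−s)·v_{2k+1,0} = λ·v_{2k,0} + λ·v_{2k+1,0} and (λ+μ−s)·v_{2k+1,1} = λ·π_{2k} + λ·π_{2k+1}. Then Σ_{q=1}^{2B+1} v_{q,0} = ρ(1+ρ)·π₁·[s̄²θ − s̄·θ(1+ρ+β) + β(1 + θ + θρ)] / ((1−s̄)(ρ−s̄)(1+ρ−s̄)(β−s̄)).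 -/
private lemma sum_pairs (f : ℕ → ℝ) (n : ℕ) :
    ∑ q ∈ Finset.Icc 1 (2 * n + 1), f q =
      f 1 + ∑ k ∈ Finset.Icc 1 n, (f (2 * k) + f (2 * k + 1)) := by
  induction n with
  | zero => simp
  | succ n ih =>
    have h1 : 2 * (n + 1) + 1 = (2 * n + 1) + 1 + 1 := by ring
    rw [h1, Finset.sum_Icc_succ_top (by omega), Finset.sum_Icc_succ_top (by omega), ih,
      Finset.sum_Icc_succ_top (show 1 ≤ n + 1 by omega)]
    simp only [show 2 * n + 1 + 1 = 2 * (n + 1) from by omega,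
      show 2 * n + 2 + 1 = 2 * (n + 1) + 1 from by omega]
    ring

set_option maxHeartbeats 2000000 in
/-- LCFS-PS, EH only when system is empty: the solution of the SHS equations sums
to the claimed MGF of AoI. -/
theorem stmt_9 (lam eta mu : ℝ) (hlam : 0 < lam) (heta : 0 < eta) (hmu : 0 < mu)
    (B : ℕ) (hB : 2 ≤ B)
    (rho beta : ℝ) (hrho : rho = lam / mu) (hbeta : beta = eta / mu)
    (theta pi1 : ℝ)
    (htheta : theta = if rho = beta then (B : ℝ)
      else beta * (beta ^ B - rho ^ B) / (rho ^ B * (beta - rho)))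
    (hpi1 : pi1 = if rho = beta then 1 / (1 + (B : ℝ) * (1 + rho))
      else rho ^ B * (beta - rho) /
        (rho ^ B * (beta - rho) + beta * (1 + rho) * (beta ^ B - rho ^ B)))
    (pi : ℕ → ℝ)
    (hp1 : pi 1 = pi1)
    (hpeven : ∀ i, 1 ≤ i → i ≤ B → pi (2 * i) = (beta / rho) ^ i * pi1)
    (hpodd : ∀ i, 1 ≤ i → i ≤ B → pi (2 * i + 1) = rho * (beta / rho) ^ i * pi1)
    (s sbar : ℝ) (hsbar : sbar = s / mu) (hs : sbar < min 1 (min rho beta))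
    (v0 v1 : ℕ → ℝ)
    (e1a : (eta - s) * v0 1 = mu * v1 3)
    (e1b : (eta - s) * v1 1 = mu * pi 3)
    (e2a : (eta + lam - s) * v0 2 = mu * v1 5 + eta * v0 1)
    (e2b : (eta + lam - s) * v1 2 = mu * pi 5 + eta * pi 1)
    (e3a : ∀ k, 2 ≤ k → k ≤ B - 1 →
      (eta + lam - s) * v0 (2 * k) = mu * v1 (2 * k + 3) + eta * v0 (2 * k - 2))
    (e3b : ∀ k, 2 ≤ k → k ≤ B - 1 →
      (eta + lam - s) * v1 (2 * k) = mu * pi (2 * k + 3) + eta * pi (2 * k - 2))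
    (e4a : (lam - s) * v0 (2 * B) = eta * v0 (2 * B - 2))
    (e4b : (lam - s) * v1 (2 * B) = eta * pi (2 * B - 2))
    (e5a : ∀ k, 1 ≤ k → k ≤ B →
      (lam + mu - s) * v0 (2 * k + 1) = lam * v0 (2 * k) + lam * v0 (2 * k + 1))
    (e5b : ∀ k, 1 ≤ k → k ≤ B →
      (lam + mu - s) * v1 (2 * k + 1) = lam * pi (2 * k) + lam * pi (2 * k + 1)) :
    ∑ q ∈ Finset.Icc 1 (2 * B + 1), v0 q =
      rho * (1 + rho) * pi1 * (sbar ^ 2 * theta - sbar * theta * (1 + rho + beta)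
          + beta * (1 + theta + theta * rho))
        / ((1 - sbar) * (rho - sbar) * (1 + rho - sbar) * (beta - sbar)) := by
  -- basic positivity
  have hrho0 : 0 < rho := by rw [hrho]; positivity
  have hbeta0 : 0 < beta := by rw [hbeta]; positivity
  obtain ⟨hx1, hxr, hxb⟩ : sbar < 1 ∧ sbar < rho ∧ sbar < beta := by
    simpa [lt_min_iff, and_assoc] using hs
  have h1x : (0:ℝ) < 1 - sbar := by linarith
  have hrx : (0:ℝ) < rho - sbar := by linarith
  have hbx : (0:ℝ) < beta - sbar := by linarith
  have h1rx : (0:ℝ) < 1 + rho - sbar := by linarith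
  set r : ℝ := beta / rho with hr
  have hr0 : 0 < r := by rw [hr]; positivity
  have hbr : beta = rho * r := by rw [hr]; field_simp
  have hbx' : (0:ℝ) < rho * r - sbar := by rw [← hbr]; exact hbx
  have heta'' : eta = mu * (rho * r) := by
    rw [← hbr, hbeta]; field_simp
  have hlam' : lam = mu * rho := by rw [hrho]; field_simp
  have hs'' : s = mu * sbar := by rw [hsbar]; field_simp
  -- nonzero coefficients
  have hA1 : (0:ℝ) < eta - s := by rw [heta'', hs'']; nlinarith [mul_pos hmu hbx']
  have hA2 : (0:ℝ) < eta + lam - s := by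
    rw [heta'', hlam', hs'']; nlinarith [mul_pos hmu hbx', mul_pos hmu hrho0]
  have hA3 : (0:ℝ) < lam - s := by rw [hlam', hs'']; nlinarith [mul_pos hmu hrx]
  have hA4 : (0:ℝ) < lam + mu - s := by rw [hlam', hs'']; nlinarith [mul_pos hmu h1rx]
  have hA5 : (0:ℝ) < mu - s := by rw [hs'']; nlinarith [mul_pos hmu h1x]
  -- theta facts
  have hts : theta = ∑ k ∈ Finset.Icc 1 B, r ^ k := by
    rcases eq_or_ne rho beta with h | h
    · have hr1 : r = 1 := by rw [hr, ← h, div_self hrho0.ne']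
      rw [htheta, if_pos h]
      simp [hr1, Nat.card_Icc]
    · have hbne : beta - rho ≠ 0 := sub_ne_zero.mpr (Ne.symm h)
      have hr1 : r ≠ 1 := by
        rw [hr]; intro hc; apply h
        field_simp at hc; linarith
      have hrm1 : r - 1 ≠ 0 := sub_ne_zero.mpr hr1
      have hthetar : theta = r * (r ^ B - 1) / (r - 1) := by
        rw [htheta, if_neg h, hr, div_pow]
        have hpB : rho ^ B ≠ 0 := pow_ne_zero _ hrho0.ne'
        rw [hr, div_sub_one hrho0.ne'] at hrm1
        field_simp
      rw [hthetar, ← Finset.Ico_add_one_right_eq_Icc, Finset.sum_Ico_eq_sum_range]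
      have hB1 : B + 1 - 1 = B := by omega
      rw [hB1]
      have : ∀ i ∈ Finset.range B, r ^ (1 + i) = r * r ^ i := by
        intro i _; rw [pow_add, pow_one]
      rw [Finset.sum_congr rfl this, ← Finset.mul_sum, geom_sum_eq hr1, mul_div_assoc]
  have hkey : r ^ (B + 1) = r * (1 + theta) - theta := by
    rcases eq_or_ne rho beta with h | h
    · have hr1 : r = 1 := by rw [hr, ← h, div_self hrho0.ne']
      rw [htheta, if_pos h, hr1]; simp
    · have hbne : beta - rho ≠ 0 := sub_ne_zero.mpr (Ne.symm h)
      have hr1 : r ≠ 1 := by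
        rw [hr]; intro hc; apply h
        field_simp at hc; linarith
      have hrm1 : r - 1 ≠ 0 := sub_ne_zero.mpr hr1
      have hthetar : theta = r * (r ^ B - 1) / (r - 1) := by
        rw [htheta, if_neg h, hr, div_pow]
        have hpB : rho ^ B ≠ 0 := pow_ne_zero _ hrho0.ne'
        rw [hr, div_sub_one hrho0.ne'] at hrm1
        field_simp
      rw [hthetar]
      field_simp
      ring
  have hTB : r ^ B = (r * (1 + theta) - theta) / r := by
    rw [eq_div_iff hr0.ne', ← pow_succ]; exact hkey
  -- stationary values of v1 at odd indices
  have hv1 : ∀ k, 1 ≤ k → k ≤ B →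
      v1 (2 * k + 1) = rho * (1 + rho) * pi1 * r ^ k / (1 + rho - sbar) := by
    intro k h1 h2
    apply mul_left_cancel₀ hA4.ne'
    rw [e5b k h1 h2, hpeven k h1 h2, hpodd k h1 h2, hlam', hs'']
    field_simp
    ring
  have hv13 : v1 3 = rho * (1 + rho) * pi1 * r ^ 1 / (1 + rho - sbar) := by
    have := hv1 1 (by omega) (by omega); norm_num at this ⊢; exact this
  have hv15 : v1 5 = rho * (1 + rho) * pi1 * r ^ 2 / (1 + rho - sbar) := by
    have := hv1 2 (by omega) (by omega); norm_num at this ⊢; exact this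
  -- v0 1
  have hv01 : v0 1 = rho * (1 + rho) * pi1 * r ^ 1 /
      ((1 + rho - sbar) * (rho * r - sbar)) := by
    apply mul_left_cancel₀ hA1.ne'
    rw [e1a, hv13, heta'', hs'']
    field_simp
  -- v0 at even indices 2..2(B-1)
  have heven : ∀ k, 1 ≤ k → k ≤ B - 1 →
      v0 (2 * k) = rho * (1 + rho) * pi1 * r ^ (k + 1) /
        ((1 + rho - sbar) * (rho * r - sbar)) := by
    intro k hk1
    induction k, hk1 using Nat.le_induction with
    | base =>
      intro _
      apply mul_left_cancel₀ hA2.ne'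
      rw [show (2:ℕ) * 1 = 2 from rfl, e2a, hv15, hv01, heta'', hlam', hs'']
      field_simp
      ring
    | succ k hk ih =>
      intro hkB
      have h := e3a (k + 1) (by omega) hkB
      rw [show 2 * (k + 1) - 2 = 2 * k from by omega,
        show 2 * (k + 1) + 3 = 2 * (k + 2) + 1 from by omega] at h
      apply mul_left_cancel₀ hA2.ne'
      rw [h, ih (by omega), hv1 (k + 2) (by omega) (by omega), heta'', hlam', hs'']
      field_simp
      ring
  -- v0 at 2B
  have h2B : v0 (2 * B) = rho ^ 2 * (1 + rho) * pi1 * r ^ (B + 1) /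
      ((1 + rho - sbar) * (rho * r - sbar) * (rho - sbar)) := by
    apply mul_left_cancel₀ hA3.ne'
    rw [e4a, show 2 * B - 2 = 2 * (B - 1) from by omega,
      heven (B - 1) (by omega) (by omega), show B - 1 + 1 = B from by omega,
      heta'', hlam', hs'']
    field_simp
    ring
  -- odd indices
  have hodd : ∀ k, 1 ≤ k → k ≤ B →
      v0 (2 * k + 1) = rho * v0 (2 * k) / (1 - sbar) := by
    intro k h1 h2
    have h := e5a k h1 h2
    have h' : (mu - s) * v0 (2 * k + 1) = lam * v0 (2 * k) := by linarith
    apply mul_left_cancel₀ hA5.ne'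
    rw [h', hlam', hs'']
    field_simp
  -- assemble the sum
  rw [sum_pairs v0 B]
  have hpair : ∑ k ∈ Finset.Icc 1 B, (v0 (2 * k) + v0 (2 * k + 1)) =
      (1 + rho / (1 - sbar)) * ∑ k ∈ Finset.Icc 1 B, v0 (2 * k) := by
    rw [Finset.mul_sum]
    refine Finset.sum_congr rfl fun k hk => ?_
    obtain ⟨hk1, hk2⟩ := Finset.mem_Icc.mp hk
    rw [hodd k hk1 hk2]
    field_simp
  have hsplitv : ∑ k ∈ Finset.Icc 1 B, v0 (2 * k) =
      (∑ k ∈ Finset.Icc 1 (B - 1), v0 (2 * k)) + v0 (2 * B) := by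
    have h1 : B - 1 + 1 = B := by omega
    rw [← h1, Finset.sum_Icc_succ_top (by omega)]
    simp
  have hgs : ∑ k ∈ Finset.Icc 1 (B - 1), r ^ k = theta - r ^ B := by
    have hsplit : ∑ k ∈ Finset.Icc 1 B, r ^ k =
        (∑ k ∈ Finset.Icc 1 (B - 1), r ^ k) + r ^ B := by
      have h1 : B - 1 + 1 = B := by omega
      rw [← h1, Finset.sum_Icc_succ_top (by omega)]
      simp
    rw [hts, hsplit]; ring
  have hsum2 : ∑ k ∈ Finset.Icc 1 (B - 1), v0 (2 * k) =
      rho * (1 + rho) * pi1 * r / ((1 + rho - sbar) * (rho * r - sbar)) *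
        (theta - r ^ B) := by
    rw [← hgs, Finset.mul_sum]
    refine Finset.sum_congr rfl fun k hk => ?_
    obtain ⟨hk1, hk2⟩ := Finset.mem_Icc.mp hk
    rw [heven k hk1 hk2, pow_succ]
    ring
  rw [hpair, hsplitv, hsum2, h2B, hv01, hbr, hkey, hTB]
  field_simp
  ring
end

section
/- The function M is differentiable at 0 and (1/μ)·M′(0) equals: (Bρ³ + (3B+1)ρ² + (3B+4)ρ + B + 2) / (μρ(1+ρ)(ρB + B + 1)) if ρ = β, and (β^{B+2}(1+ρ)³ − ρ^{B+2}((β²+β)(ρ+2) + 1 + ρ)) / (μ(1+ρ)(β^{B+2}(ρ²+ρ) − ρ^{B+2}(β²+β))) if ρ ≠ β. -/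
/-!
`M` is a quadratic over a product of four linear factors, so its logarithmic derivative at `0`
is read off the factors: `M'(0)/M(0) = N'(0)/N(0) + 1 + 1/ρ + 1/(1+ρ) + 1/β`. Substituting `θ`
and `π₁` leaves rational identities. For `ρ ≠ β` everything hinges on the common denominator
`ρ^B (β-ρ) + β (1+ρ) (β^B - ρ^B) = β^(B+1) (1+ρ) - ρ^(B+1) (1+β)`, which is nonzero because,
multiplied by `β - ρ`, it becomes a sum of terms `(β-ρ)(β^n - ρ^n)`, all nonnegative and the
one with `n = B + 1` positive.
-/

section PowSubPow

variable {K : Type*} [Field K] [LinearOrder K] [IsStrictOrderedRing K] {a b : K}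

theorem sub_mul_pow_sub_pow_nonneg (ha : 0 ≤ a) (hb : 0 ≤ b) (n : ℕ) :
    0 ≤ (a - b) * (a ^ n - b ^ n) := by
  rcases le_total b a with hba | hab
  · exact mul_nonneg (sub_nonneg.2 hba) (sub_nonneg.2 (pow_le_pow_left₀ hb hba n))
  · exact mul_nonneg_of_nonpos_of_nonpos (sub_nonpos.2 hab)
      (sub_nonpos.2 (pow_le_pow_left₀ ha hab n))

theorem sub_mul_pow_sub_pow_pos (ha : 0 ≤ a) (hb : 0 ≤ b) (hab : a ≠ b) {n : ℕ} (hn : n ≠ 0) :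
    0 < (a - b) * (a ^ n - b ^ n) := by
  rcases hab.lt_or_gt with hab | hba
  · exact mul_pos_of_neg_of_neg (sub_neg.2 hab) (sub_neg.2 (pow_lt_pow_left₀ hab ha hn))
  · exact mul_pos (sub_pos.2 hba) (sub_pos.2 (pow_lt_pow_left₀ hba hb hn))

end PowSubPow

theorem hasDerivAt_quadratic_div_linear_prod_zero {p q r a b c d : ℝ} (h : a * b * c * d ≠ 0) :
    HasDerivAt (fun x => (p * x ^ 2 + q * x + r) / ((a - x) * (b - x) * (c - x) * (d - x)))
      ((q + r * (a⁻¹ + b⁻¹ + c⁻¹ + d⁻¹)) / (a * b * c * d)) 0 := by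
  have hnum : HasDerivAt (fun x : ℝ => p * x ^ 2 + q * x + r) q 0 := by
    simpa using (((hasDerivAt_pow 2 (0 : ℝ)).const_mul p).add
      ((hasDerivAt_id (0 : ℝ)).const_mul q)).add_const r
  have hlin (e : ℝ) : HasDerivAt (fun x : ℝ => e - x) (-1) 0 := by
    simpa using (hasDerivAt_id (0 : ℝ)).const_sub e
  have hden := (((hlin a).fun_mul (hlin b)).fun_mul (hlin c)).fun_mul (hlin d)
  refine (hnum.fun_div hden (by simpa using h)).congr_deriv ?_
  obtain ⟨⟨⟨ha, hb⟩, hc⟩, hd⟩ : ((a ≠ 0 ∧ b ≠ 0) ∧ c ≠ 0) ∧ d ≠ 0 := by simpa using h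
  simp only [sub_zero, zero_pow two_ne_zero, mul_zero, zero_add, add_zero]
  field_simp
  ring

section AoI

variable {ρ β : ℝ}

theorem hasDerivAt_aoi_mgf_zero (hρ : 0 < ρ) (hβ : 0 < β) (θ π : ℝ) :
    HasDerivAt (fun x => ρ * (1 + ρ) * π * (x ^ 2 * θ - x * θ * (1 + ρ + β)
        + β * (1 + θ + θ * ρ)) / ((1 - x) * (ρ - x) * (1 + ρ - x) * (β - x)))
      (π * ((1 + θ * (1 + ρ)) * (1 + β + β / ρ + β / (1 + ρ)) - θ * (1 + ρ + β)) / β) 0 := by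
  have h := hasDerivAt_quadratic_div_linear_prod_zero (p := ρ * (1 + ρ) * π * θ)
    (q := -(ρ * (1 + ρ) * π * θ * (1 + ρ + β))) (r := ρ * (1 + ρ) * π * β * (1 + θ + θ * ρ))
    (a := 1) (b := ρ) (c := 1 + ρ) (d := β) (by positivity)
  convert h using 1
  · ext x
    ring
  · field_simp
    ring

theorem aoi_mean_of_eq (hρ : 0 < ρ) (B : ℕ) :
    1 / (1 + (B : ℝ) * (1 + ρ)) * ((1 + B * (1 + ρ)) * (1 + ρ + ρ / ρ + ρ / (1 + ρ))
        - B * (1 + ρ + ρ)) / ρ =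
      ((B : ℝ) * ρ ^ 3 + (3 * (B : ℝ) + 1) * ρ ^ 2 + (3 * (B : ℝ) + 4) * ρ + (B : ℝ) + 2)
        / (ρ * (1 + ρ) * (ρ * (B : ℝ) + (B : ℝ) + 1)) := by
  have hπ : (0 : ℝ) < 1 + B * (1 + ρ) := by positivity
  have hden : (0 : ℝ) < ρ * B + B + 1 := by positivity
  field_simp
  ring

theorem aoi_mean_of_ne (hρ : 0 < ρ) (hβ : 0 < β) (h : ρ ≠ β) (B : ℕ) :
    ρ ^ B * (β - ρ) / (ρ ^ B * (β - ρ) + β * (1 + ρ) * (β ^ B - ρ ^ B))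
        * ((1 + β * (β ^ B - ρ ^ B) / (ρ ^ B * (β - ρ)) * (1 + ρ))
            * (1 + β + β / ρ + β / (1 + ρ))
          - β * (β ^ B - ρ ^ B) / (ρ ^ B * (β - ρ)) * (1 + ρ + β)) / β =
      (β ^ (B + 2) * (1 + ρ) ^ 3 - ρ ^ (B + 2) * ((β ^ 2 + β) * (ρ + 2) + 1 + ρ))
        / ((1 + ρ) * (β ^ (B + 2) * (ρ ^ 2 + ρ) - ρ ^ (B + 2) * (β ^ 2 + β))) := by
  have hβρ : β - ρ ≠ 0 := sub_ne_zero.2 h.symm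
  have hρB : ρ ^ B ≠ 0 := by positivity
  have hA : β ^ (B + 1) * (1 + ρ) - ρ ^ (B + 1) * (1 + β) ≠ 0 := by
    refine right_ne_zero_of_mul (a := β - ρ) (ne_of_gt ?_)
    have h1 := sub_mul_pow_sub_pow_pos hβ.le hρ.le h.symm B.add_one_ne_zero
    have h0 := mul_nonneg (mul_pos hρ hβ).le (sub_mul_pow_sub_pow_nonneg hβ.le hρ.le B)
    linear_combination h1 + h0
  rw [show ρ ^ B * (β - ρ) + β * (1 + ρ) * (β ^ B - ρ ^ B) =
      β ^ (B + 1) * (1 + ρ) - ρ ^ (B + 1) * (1 + β) by ring,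
    show β ^ (B + 2) * (ρ ^ 2 + ρ) - ρ ^ (B + 2) * (β ^ 2 + β) =
      ρ * β * (β ^ (B + 1) * (1 + ρ) - ρ ^ (B + 1) * (1 + β)) by ring]
  generalize β ^ (B + 1) * (1 + ρ) - ρ ^ (B + 1) * (1 + β) = A at hA ⊢
  field_simp
  ring

end AoI

theorem stmt_10_general (rho beta mu : ℝ) (hrho : 0 < rho) (hbeta : 0 < beta)
    (B : ℕ)
    (theta pi1 : ℝ)
    (htheta : theta = if rho = beta then (B : ℝ)
      else beta * (beta ^ B - rho ^ B) / (rho ^ B * (beta - rho)))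
    (hpi1 : pi1 = if rho = beta then 1 / (1 + (B : ℝ) * (1 + rho))
      else rho ^ B * (beta - rho) /
        (rho ^ B * (beta - rho) + beta * (1 + rho) * (beta ^ B - rho ^ B)))
    (M : ℝ → ℝ)
    (hM : ∀ x, M x = rho * (1 + rho) * pi1 * (x ^ 2 * theta - x * theta * (1 + rho + beta)
        + beta * (1 + theta + theta * rho))
      / ((1 - x) * (rho - x) * (1 + rho - x) * (beta - x))) :
    DifferentiableAt ℝ M 0 ∧
    (1 / mu) * deriv M 0 =
      if rho = beta then
        ((B : ℝ) * rho ^ 3 + (3 * (B : ℝ) + 1) * rho ^ 2 + (3 * (B : ℝ) + 4) * rho + (B : ℝ) + 2)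
          / (mu * rho * (1 + rho) * (rho * (B : ℝ) + (B : ℝ) + 1))
      else
        (beta ^ (B + 2) * (1 + rho) ^ 3
            - rho ^ (B + 2) * ((beta ^ 2 + beta) * (rho + 2) + 1 + rho))
          / (mu * (1 + rho) * (beta ^ (B + 2) * (rho ^ 2 + rho)
            - rho ^ (B + 2) * (beta ^ 2 + beta))) := by
  obtain rfl : M = _ := funext hM
  have hMd := hasDerivAt_aoi_mgf_zero hrho hbeta theta pi1
  refine ⟨hMd.differentiableAt, ?_⟩
  rw [hMd.deriv]
  subst htheta hpi1
  split_ifs with h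
  · subst h
    rw [aoi_mean_of_eq hrho B, div_mul_div_comm, one_mul]
    ac_rfl
  · rw [aoi_mean_of_ne hrho hbeta h B, div_mul_div_comm, one_mul]
    ac_rfl

/-- First moment of AoI for LCFS-PS (EH only when system is empty), from the MGF. -/
theorem stmt_10 (rho beta mu : ℝ) (hrho : 0 < rho) (hbeta : 0 < beta) (hmu : 0 < mu)
    (B : ℕ) (hB : 1 ≤ B)
    (theta pi1 : ℝ)
    (htheta : theta = if rho = beta then (B : ℝ)
      else beta * (beta ^ B - rho ^ B) / (rho ^ B * (beta - rho)))
    (hpi1 : pi1 = if rho = beta then 1 / (1 + (B : ℝ) * (1 + rho))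
      else rho ^ B * (beta - rho) /
        (rho ^ B * (beta - rho) + beta * (1 + rho) * (beta ^ B - rho ^ B)))
    (M : ℝ → ℝ)
    (hM : ∀ x, M x = rho * (1 + rho) * pi1 * (x ^ 2 * theta - x * theta * (1 + rho + beta)
        + beta * (1 + theta + theta * rho))
      / ((1 - x) * (rho - x) * (1 + rho - x) * (beta - x))) :
    DifferentiableAt ℝ M 0 ∧
    (1 / mu) * deriv M 0 =
      if rho = beta then
        ((B : ℝ) * rho ^ 3 + (3 * (B : ℝ) + 1) * rho ^ 2 + (3 * (B : ℝ) + 4) * rho + (B : ℝ) + 2)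
          / (mu * rho * (1 + rho) * (rho * (B : ℝ) + (B : ℝ) + 1))
      else
        (beta ^ (B + 2) * (1 + rho) ^ 3
            - rho ^ (B + 2) * ((beta ^ 2 + beta) * (rho + 2) + 1 + rho))
          / (mu * (1 + rho) * (beta ^ (B + 2) * (rho ^ 2 + rho)
            - rho ^ (B + 2) * (beta ^ 2 + beta))) :=
  stmt_10_general rho beta mu hrho hbeta B theta pi1 htheta hpi1 M hM
end
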